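/- If ξ is gamma distributed with shape x/b and scale b (x > 0), and f : (0,∞) → ℝ is smooth with bounded derivatives up to order 2, then E[f(ξ) ln ξ] = f(x) ln x + (xb/2)( f''(x) ln x + 2 f'(x)/x − f(x)/x² ) + o(b) as b → 0⁺. -/

import Mathlib

/-!
Write `g t = f t * log t`, so that the integral is `E g(ξ)`, and let `P` be the second-order
Taylor polynomial of `g` at `x`. Since `E (ξ - x) = 0` and `E (ξ - x)² = x b`, the expectation
`E P(ξ)` is exactly the two leading terms. Given `ε > 0`, continuity of `g''` at `x` makes
`|g - P|` at most `ε (t - x)²` within some `δ ≤ 1` of `x`; farther away the growth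
`|g t| ≤ C (t + t⁻¹)` bounds it by a multiple of `(t + t⁻¹) (t - x)⁴ / δ⁴`. The gamma
expectations of these two bounds are `ε x b` and `O(b²)`: multiplying the density by `t` or `t⁻¹`
only moves its mean from `x` to `x ± b`, and the fourth central moment of a gamma law of mean `y`
and scale `b` is `3 y² b² + 6 y b³`.
-/

open Real MeasureTheory Filter

/-- The gamma kernel (gamma density with shape `x/b`, scale `b`). -/
noncomputable def gammaKernel (x b t : ℝ) : ℝ :=
  t ^ (x / b - 1) * Real.exp (-t / b) / (b ^ (x / b) * Real.Gamma (x / b))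

open Set Topology Asymptotics

theorem abs_sub_taylor_two_le {g g' g'' : ℝ → ℝ} {x t ε : ℝ}
    (hg : ∀ y ∈ uIcc x t, HasDerivAt g (g' y) y)
    (hg' : ∀ y ∈ uIcc x t, HasDerivAt g' (g'' y) y)
    (hg'' : ∀ y ∈ uIcc x t, |g'' y - g'' x| ≤ ε) :
    |g t - (g x + g' x * (t - x) + g'' x / 2 * (t - x) ^ 2)| ≤ ε * (t - x) ^ 2 := by
  have hx : x ∈ uIcc x t := left_mem_uIcc
  have hε : 0 ≤ ε := (abs_nonneg _).trans (hg'' x hx)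
  have hg'_lin : ∀ y ∈ uIcc x t, |g' y - g' x - g'' x * (y - x)| ≤ ε * |t - x| := by
    intro y hy
    have h := (convex_uIcc x t).norm_image_sub_le_of_norm_hasDerivWithin_le
      (f := fun z => g' z - g'' x * z) (f' := fun z => g'' z - g'' x)
      (fun z hz => by
        simpa using ((hg' z hz).fun_sub ((hasDerivAt_id z).const_mul (g'' x))).hasDerivWithinAt)
      (fun z hz => hg'' z hz) hx hy
    calc |g' y - g' x - g'' x * (y - x)| = ‖(g' y - g'' x * y) - (g' x - g'' x * x)‖ := by
          rw [Real.norm_eq_abs]; ring_nf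
      _ ≤ ε * |y - x| := h
      _ ≤ ε * |t - x| := mul_le_mul_of_nonneg_left (abs_sub_left_of_mem_uIcc hy) hε
  have h := (convex_uIcc x t).norm_image_sub_le_of_norm_hasDerivWithin_le
    (f := fun z => g z - g' x * z - g'' x / 2 * (z - x) ^ 2)
    (f' := fun z => g' z - g' x - g'' x * (z - x))
    (fun z hz => by
      have hsq : HasDerivAt (fun z => g'' x / 2 * (z - x) ^ 2) (g'' x * (z - x)) z :=
        ((((hasDerivAt_id' z).sub_const x).fun_pow 2).const_mul (g'' x / 2)).congr_deriv
          (by norm_num; ring)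
      exact (((hg z hz).fun_sub ((hasDerivAt_id' z).const_mul (g' x))).fun_sub
        hsq).hasDerivWithinAt.congr_deriv (by ring))
    (fun z hz => hg'_lin z hz) hx right_mem_uIcc
  calc |g t - (g x + g' x * (t - x) + g'' x / 2 * (t - x) ^ 2)|
      = ‖(g t - g' x * t - g'' x / 2 * (t - x) ^ 2)
          - (g x - g' x * x - g'' x / 2 * (x - x) ^ 2)‖ := by
        rw [Real.norm_eq_abs]; ring_nf
    _ ≤ ε * |t - x| * ‖t - x‖ := h
    _ = ε * (t - x) ^ 2 := by rw [Real.norm_eq_abs, mul_assoc, ← sq, sq_abs]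

theorem one_le_add_inv {t : ℝ} (ht : 0 < t) : 1 ≤ t + t⁻¹ := by
  rcases le_total t 1 with h | h
  · linarith [one_le_inv₀ ht |>.2 h]
  · linarith [inv_pos.2 ht]

theorem abs_log_le_add_inv {t : ℝ} (ht : 0 < t) : |log t| ≤ t + t⁻¹ := by
  rw [abs_le]
  constructor
  · have := log_le_sub_one_of_pos (inv_pos.2 ht)
    rw [log_inv] at this
    linarith
  · linarith [log_le_sub_one_of_pos ht, inv_pos.2 ht]

theorem abs_sub_taylor_two_le_of_le_abs_sub {y x t δ C c₀ c₁ c₂ : ℝ} (hδ : 0 < δ)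
    (hδ1 : δ ≤ 1) (ht : 0 < t) (hfar : δ ≤ |t - x|) (hy : |y| ≤ C * (t + t⁻¹)) :
    |y - (c₀ + c₁ * (t - x) + c₂ / 2 * (t - x) ^ 2)| ≤
      (C + |c₀| + |c₁| + |c₂|) / δ ^ 4 * ((t + t⁻¹) * (t - x) ^ 4) := by
  set u := |t - x|
  set r := u ^ 4 / δ ^ 4
  have hw := one_le_add_inv ht
  have hC : 0 ≤ C := by nlinarith [abs_nonneg y]
  have hδ4 : 0 < δ ^ 4 := by positivity
  have hr1 : 1 ≤ r := by
    rw [one_le_div hδ4]; exact pow_le_pow_left₀ hδ.le hfar 4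
  have hr_u : u ≤ r := by
    rw [le_div_iff₀ hδ4]
    nlinarith [pow_le_pow_left₀ hδ.le hfar 3,
      pow_le_pow_of_le_one hδ.le hδ1 (by norm_num : 3 ≤ 4)]
  have hr_u2 : u ^ 2 ≤ r := by
    rw [le_div_iff₀ hδ4]
    nlinarith [pow_le_pow_left₀ hδ.le hfar 2,
      pow_le_pow_of_le_one hδ.le hδ1 (by norm_num : 2 ≤ 4)]
  have htri : |y - (c₀ + c₁ * (t - x) + c₂ / 2 * (t - x) ^ 2)| ≤
      |y| + |c₀| + |c₁| * u + |c₂| * u ^ 2 := by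
    have hP :
        |c₀ + c₁ * (t - x) + c₂ / 2 * (t - x) ^ 2| ≤ |c₀| + |c₁| * u + |c₂| * u ^ 2 := by
      refine (abs_add_three _ _ _).trans ?_
      rw [abs_mul, abs_mul, abs_div, abs_two, abs_pow]
      nlinarith [abs_nonneg c₂, sq_nonneg u]
    linarith [abs_sub y (c₀ + c₁ * (t - x) + c₂ / 2 * (t - x) ^ 2)]
  have hrhs : (C + |c₀| + |c₁| + |c₂|) / δ ^ 4 * ((t + t⁻¹) * (t - x) ^ 4) =
      (C + |c₀| + |c₁| + |c₂|) * (t + t⁻¹) * r := by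
    rw [← Even.pow_abs (by decide : Even 4) (t - x)]; ring
  have hwr : r ≤ (t + t⁻¹) * r := le_mul_of_one_le_left (by linarith) hw
  rw [hrhs]
  nlinarith [abs_nonneg c₀, abs_nonneg c₁, abs_nonneg c₂, mul_le_mul_of_nonneg_left hr1 hC,
    mul_le_mul_of_nonneg_left hr_u (abs_nonneg c₁),
    mul_le_mul_of_nonneg_left hr_u2 (abs_nonneg c₂)]

theorem HasDerivAt.mul_log {f : ℝ → ℝ} {f' t : ℝ} (hf : HasDerivAt f f' t) (ht : t ≠ 0) :
    HasDerivAt (fun s => f s * Real.log s) (f' * Real.log t + f t / t) t := by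
  simpa [div_eq_mul_inv] using hf.fun_mul (hasDerivAt_log ht)

theorem hasDerivAt_mul_log_add_div {f f' : ℝ → ℝ} {f'' t : ℝ} (hf : HasDerivAt f (f' t) t)
    (hf' : HasDerivAt f' f'' t) (ht : t ≠ 0) :
    HasDerivAt (fun s => f' s * log s + f s / s)
      (f'' * log t + 2 * f' t / t - f t / t ^ 2) t := by
  refine ((hf'.mul_log ht).fun_add (hf.div (hasDerivAt_id' t) ht)).congr_deriv ?_
  field_simp
  ring

section GammaKernel

variable {x b : ℝ}

theorem gammaKernel_eq (x b : ℝ) : gammaKernel x b =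
    fun t => (b ^ (x / b) * Gamma (x / b))⁻¹ * (t ^ (x / b - 1) * exp (-(b⁻¹ * t))) := by
  ext t
  rw [gammaKernel, ← div_eq_inv_mul, neg_div, inv_mul_eq_div]

theorem measurable_gammaKernel (x b : ℝ) : Measurable (gammaKernel x b) := by
  unfold gammaKernel; fun_prop

theorem gammaKernel_nonneg (hx : 0 ≤ x) (hb : 0 ≤ b) {t : ℝ} (ht : 0 ≤ t) :
    0 ≤ gammaKernel x b t := by
  have := Gamma_nonneg_of_nonneg (div_nonneg hx hb)
  unfold gammaKernel
  positivity

theorem integrableOn_gammaKernel (hx : 0 < x) (hb : 0 < b) :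
    IntegrableOn (gammaKernel x b) (Ioi 0) := by
  rw [gammaKernel_eq]
  have h := integrableOn_rpow_mul_exp_neg_mul_rpow (s := x / b - 1) (by linarith [div_pos hx hb])
    one_pos (inv_pos.2 hb)
  simp_rw [rpow_one, neg_mul] at h
  exact h.const_mul _

theorem integral_gammaKernel (hx : 0 < x) (hb : 0 < b) :
    ∫ t in Ioi 0, gammaKernel x b t = 1 := by
  have hΓ := Gamma_pos_of_pos (div_pos hx hb)
  simp_rw [gammaKernel_eq, integral_const_mul,
    integral_rpow_mul_exp_neg_mul_Ioi (div_pos hx hb) (inv_pos.2 hb), one_div, inv_inv]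
  field_simp

theorem mul_gammaKernel (hx : 0 < x) (hb : 0 < b) {t : ℝ} (ht : t ≠ 0) :
    t * gammaKernel x b t = x * gammaKernel (x + b) b t := by
  have hΓ := (Gamma_pos_of_pos (div_pos hx hb)).ne'
  rw [gammaKernel, gammaKernel, add_div, div_self hb.ne', add_sub_cancel_right,
    rpow_sub_one ht, rpow_add_one hb.ne', Gamma_add_one (div_pos hx hb).ne']
  field_simp

theorem inv_mul_gammaKernel (hb : 0 < b) (hbx : b < x) {t : ℝ} (ht : t ≠ 0) :
    t⁻¹ * gammaKernel x b t = (x - b)⁻¹ * gammaKernel (x - b) b t := by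
  have h := mul_gammaKernel (sub_pos.2 hbx) hb ht
  rw [sub_add_cancel] at h
  rw [inv_mul_eq_iff_eq_mul₀ ht, ← mul_assoc, mul_comm t, mul_assoc, h, ← mul_assoc,
    inv_mul_cancel₀ (sub_pos.2 hbx).ne', one_mul]

theorem sub_pow_succ_mul_gammaKernel (hx : 0 < x) (hb : 0 < b) (a : ℝ) (n : ℕ) {t : ℝ}
    (ht : t ≠ 0) : (t - a) ^ (n + 1) * gammaKernel x b t =
      x * ((t - a) ^ n * gammaKernel (x + b) b t) - a * ((t - a) ^ n * gammaKernel x b t) := by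
  rw [mul_left_comm, ← mul_gammaKernel hx hb ht]
  ring

theorem integrableOn_sub_pow_mul_gammaKernel (hx : 0 < x) (hb : 0 < b) (a : ℝ) (n : ℕ) :
    IntegrableOn (fun t => (t - a) ^ n * gammaKernel x b t) (Ioi 0) := by
  induction n generalizing x with
  | zero => simpa using integrableOn_gammaKernel hx hb
  | succ n ih =>
    exact IntegrableOn.congr_fun (((ih (add_pos hx hb)).const_mul x).sub ((ih hx).const_mul a))
      (fun t ht => (sub_pow_succ_mul_gammaKernel hx hb a n (ne_of_gt ht)).symm) measurableSet_Ioi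

theorem integrableOn_sub_mul_gammaKernel (hx : 0 < x) (hb : 0 < b) (a : ℝ) :
    IntegrableOn (fun t => (t - a) * gammaKernel x b t) (Ioi 0) := by
  simpa using integrableOn_sub_pow_mul_gammaKernel hx hb a 1

theorem integral_sub_pow_succ_mul_gammaKernel (hx : 0 < x) (hb : 0 < b) (a : ℝ) (n : ℕ) :
    ∫ t in Ioi 0, (t - a) ^ (n + 1) * gammaKernel x b t =
      x * (∫ t in Ioi 0, (t - a) ^ n * gammaKernel (x + b) b t)
        - a * ∫ t in Ioi 0, (t - a) ^ n * gammaKernel x b t := by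
  rw [setIntegral_congr_fun measurableSet_Ioi
      (fun t ht => sub_pow_succ_mul_gammaKernel hx hb a n (ne_of_gt ht)),
    integral_sub ((integrableOn_sub_pow_mul_gammaKernel (add_pos hx hb) hb a n).const_mul x)
      ((integrableOn_sub_pow_mul_gammaKernel hx hb a n).const_mul a),
    integral_const_mul, integral_const_mul]

theorem integral_sub_mul_gammaKernel (hx : 0 < x) (hb : 0 < b) (a : ℝ) :
    ∫ t in Ioi 0, (t - a) * gammaKernel x b t = x - a := by
  simpa [integral_gammaKernel hx hb, integral_gammaKernel (add_pos hx hb) hb] using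
    integral_sub_pow_succ_mul_gammaKernel hx hb a 0

theorem integral_sub_sq_mul_gammaKernel (hx : 0 < x) (hb : 0 < b) (a : ℝ) :
    ∫ t in Ioi 0, (t - a) ^ 2 * gammaKernel x b t = (x - a) ^ 2 + x * b := by
  rw [integral_sub_pow_succ_mul_gammaKernel hx hb]
  simp only [pow_one]
  rw [integral_sub_mul_gammaKernel hx hb, integral_sub_mul_gammaKernel (add_pos hx hb) hb]
  ring

theorem integral_sub_pow_three_mul_gammaKernel (hx : 0 < x) (hb : 0 < b) (a : ℝ) :
    ∫ t in Ioi 0, (t - a) ^ 3 * gammaKernel x b t =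
      (x - a) ^ 3 + 3 * x * b * (x - a) + 2 * x * b ^ 2 := by
  rw [integral_sub_pow_succ_mul_gammaKernel hx hb, integral_sub_sq_mul_gammaKernel hx hb,
    integral_sub_sq_mul_gammaKernel (add_pos hx hb) hb]
  ring

theorem integral_sub_pow_four_mul_gammaKernel (hx : 0 < x) (hb : 0 < b) (a : ℝ) :
    ∫ t in Ioi 0, (t - a) ^ 4 * gammaKernel x b t =
      (x - a) ^ 4 + 6 * x * b * (x - a) ^ 2 + 8 * x * b ^ 2 * (x - a)
        + 3 * x ^ 2 * b ^ 2 + 6 * x * b ^ 3 := by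
  rw [integral_sub_pow_succ_mul_gammaKernel hx hb, integral_sub_pow_three_mul_gammaKernel hx hb,
    integral_sub_pow_three_mul_gammaKernel (add_pos hx hb) hb]
  ring

theorem integrableOn_quadratic_mul_gammaKernel (hx : 0 < x) (hb : 0 < b) (c₀ c₁ c₂ : ℝ) :
    IntegrableOn (fun t => (c₀ + c₁ * (t - x) + c₂ * (t - x) ^ 2) * gammaKernel x b t)
      (Ioi 0) := by
  simp_rw [add_mul, mul_assoc]
  exact (((integrableOn_gammaKernel hx hb).const_mul c₀).fun_add
    ((integrableOn_sub_mul_gammaKernel hx hb x).const_mul c₁)).fun_add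
    ((integrableOn_sub_pow_mul_gammaKernel hx hb x 2).const_mul c₂)

theorem integral_quadratic_mul_gammaKernel (hx : 0 < x) (hb : 0 < b) (c₀ c₁ c₂ : ℝ) :
    ∫ t in Ioi 0, (c₀ + c₁ * (t - x) + c₂ * (t - x) ^ 2) * gammaKernel x b t =
      c₀ + c₂ * (x * b) := by
  simp_rw [add_mul, mul_assoc]
  rw [integral_add (((integrableOn_gammaKernel hx hb).const_mul c₀).fun_add
      ((integrableOn_sub_mul_gammaKernel hx hb x).const_mul c₁))
      ((integrableOn_sub_pow_mul_gammaKernel hx hb x 2).const_mul c₂),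
    integral_add ((integrableOn_gammaKernel hx hb).const_mul c₀)
      ((integrableOn_sub_mul_gammaKernel hx hb x).const_mul c₁),
    integral_const_mul, integral_const_mul, integral_const_mul, integral_gammaKernel hx hb,
    integral_sub_mul_gammaKernel hx hb, integral_sub_sq_mul_gammaKernel hx hb]
  ring

theorem add_inv_mul_sub_pow_four_mul_gammaKernel (hb : 0 < b) (hbx : b < x) {t : ℝ} (ht : t ≠ 0) :
    (t + t⁻¹) * (t - x) ^ 4 * gammaKernel x b t =
      x * ((t - x) ^ 4 * gammaKernel (x + b) b t)
        + (x - b)⁻¹ * ((t - x) ^ 4 * gammaKernel (x - b) b t) := by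
  rw [mul_left_comm (x - b)⁻¹, ← inv_mul_gammaKernel hb hbx ht, mul_left_comm x,
    ← mul_gammaKernel (hb.trans hbx) hb ht]
  ring

theorem integrableOn_add_inv_mul_sub_pow_four_mul_gammaKernel (hb : 0 < b) (hbx : b < x) :
    IntegrableOn (fun t => (t + t⁻¹) * (t - x) ^ 4 * gammaKernel x b t) (Ioi 0) :=
  IntegrableOn.congr_fun
    (((integrableOn_sub_pow_mul_gammaKernel (add_pos (hb.trans hbx) hb) hb x 4).const_mul x).add
      ((integrableOn_sub_pow_mul_gammaKernel (sub_pos.2 hbx) hb x 4).const_mul (x - b)⁻¹))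
    (fun _ ht => (add_inv_mul_sub_pow_four_mul_gammaKernel hb hbx (ne_of_gt ht)).symm)
    measurableSet_Ioi

theorem integral_add_inv_mul_sub_pow_four_mul_gammaKernel (hb : 0 < b) (hbx : b < x) :
    ∫ t in Ioi 0, (t + t⁻¹) * (t - x) ^ 4 * gammaKernel x b t =
      b ^ 2 * (x * (b ^ 2 + 20 * b * (x + b) + 3 * (x + b) ^ 2)
        + (b ^ 2 + 4 * b * (x - b) + 3 * (x - b) ^ 2) / (x - b)) := by
  have hx := hb.trans hbx
  rw [setIntegral_congr_fun measurableSet_Ioi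
      (fun t ht => add_inv_mul_sub_pow_four_mul_gammaKernel hb hbx (ne_of_gt ht)),
    integral_add ((integrableOn_sub_pow_mul_gammaKernel (add_pos hx hb) hb x 4).const_mul x)
      ((integrableOn_sub_pow_mul_gammaKernel (sub_pos.2 hbx) hb x 4).const_mul (x - b)⁻¹),
    integral_const_mul, integral_const_mul,
    integral_sub_pow_four_mul_gammaKernel (add_pos hx hb) hb,
    integral_sub_pow_four_mul_gammaKernel (sub_pos.2 hbx) hb]
  field_simp
  ring

theorem isLittleO_integral_add_inv_mul_sub_pow_four_mul_gammaKernel (hx : 0 < x) :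
    (fun b => ∫ t in Ioi 0, (t + t⁻¹) * (t - x) ^ 4 * gammaKernel x b t) =o[𝓝[>] 0] id := by
  set Q : ℝ → ℝ := fun b => x * (b ^ 2 + 20 * b * (x + b) + 3 * (x + b) ^ 2)
    + (b ^ 2 + 4 * b * (x - b) + 3 * (x - b) ^ 2) / (x - b)
  have hQ : Q =O[𝓝[>] 0] fun _ => (1 : ℝ) :=
    ((ContinuousAt.tendsto (by fun_prop (disch := simp [hx.ne'])) :
      Tendsto Q (𝓝 0) (𝓝 (Q 0))).mono_left nhdsWithin_le_nhds).isBigO_one ℝ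
  have hb2 : (fun b : ℝ => b ^ 2) =o[𝓝[>] 0] id :=
    (isLittleO_pow_id one_lt_two).mono nhdsWithin_le_nhds
  refine ((hb2.mul_isBigO hQ).congr' ?_ (.of_forall fun b => mul_one b)).trans_isBigO
    (isBigO_refl _ _)
  filter_upwards [Ioo_mem_nhdsGT hx] with b hb
  exact (integral_add_inv_mul_sub_pow_four_mul_gammaKernel hb.1 hb.2).symm

theorem abs_integral_mul_gammaKernel_sub_le {g : ℝ → ℝ} {ε A c₀ c₁ c₂ : ℝ} (hb : 0 < b)
    (hbx : b < x) (hg : AEStronglyMeasurable g (volume.restrict (Ioi 0)))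
    (hR : ∀ t > 0, |g t - (c₀ + c₁ * (t - x) + c₂ / 2 * (t - x) ^ 2)| ≤
      ε * (t - x) ^ 2 + A * ((t + t⁻¹) * (t - x) ^ 4)) :
    |(∫ t in Ioi 0, g t * gammaKernel x b t) - c₀ - x * b / 2 * c₂| ≤
      ε * (x * b) + A * ∫ t in Ioi 0, (t + t⁻¹) * (t - x) ^ 4 * gammaKernel x b t := by
  have hx := hb.trans hbx
  set P : ℝ → ℝ := fun t => c₀ + c₁ * (t - x) + c₂ / 2 * (t - x) ^ 2
  set K := gammaKernel x b
  have hPK := integrableOn_quadratic_mul_gammaKernel hx hb c₀ c₁ (c₂ / 2)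
  have h2 := (integrableOn_sub_pow_mul_gammaKernel hx hb x 2).const_mul ε
  have h4 := (integrableOn_add_inv_mul_sub_pow_four_mul_gammaKernel hb hbx).const_mul A
  have hB : IntegrableOn
      (fun t => (ε * (t - x) ^ 2 + A * ((t + t⁻¹) * (t - x) ^ 4)) * K t) (Ioi 0) :=
    IntegrableOn.congr_fun (h2.fun_add h4) (fun t _ => by ring) measurableSet_Ioi
  have hRK_le : ∀ t ∈ Ioi (0 : ℝ),
      ‖(g t - P t) * K t‖ ≤ (ε * (t - x) ^ 2 + A * ((t + t⁻¹) * (t - x) ^ 4)) * K t := by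
    intro t ht
    rw [norm_mul, Real.norm_eq_abs, Real.norm_eq_abs,
      abs_of_nonneg (gammaKernel_nonneg hx.le hb.le (le_of_lt ht))]
    exact mul_le_mul_of_nonneg_right (hR t ht) (gammaKernel_nonneg hx.le hb.le (le_of_lt ht))
  have hRK : IntegrableOn (fun t => (g t - P t) * K t) (Ioi 0) :=
    Integrable.mono' hB
      ((hg.sub (by fun_prop : Continuous P).aestronglyMeasurable).mul
        (measurable_gammaKernel x b).aestronglyMeasurable)
      ((ae_restrict_iff' measurableSet_Ioi).2 (.of_forall hRK_le))
  have hsplit : ∫ t in Ioi 0, g t * K t =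
      (∫ t in Ioi 0, (g t - P t) * K t) + (c₀ + c₂ / 2 * (x * b)) := by
    rw [← integral_quadratic_mul_gammaKernel hx hb c₀ c₁ (c₂ / 2), ← integral_add hRK hPK]
    congr 1 with t
    ring
  calc |(∫ t in Ioi 0, g t * K t) - c₀ - x * b / 2 * c₂|
      = ‖∫ t in Ioi 0, (g t - P t) * K t‖ := by rw [hsplit, Real.norm_eq_abs]; ring_nf
    _ ≤ ∫ t in Ioi 0, (ε * (t - x) ^ 2 + A * ((t + t⁻¹) * (t - x) ^ 4)) * K t :=
      norm_integral_le_of_norm_le hB ((ae_restrict_iff' measurableSet_Ioi).2 (.of_forall hRK_le))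
    _ = ε * (x * b) + A * ∫ t in Ioi 0, (t + t⁻¹) * (t - x) ^ 4 * K t := by
      have hvar : ∫ t in Ioi 0, (t - x) ^ 2 * K t = x * b := by
        rw [integral_sub_sq_mul_gammaKernel hx hb]; ring
      rw [← hvar, ← integral_const_mul, ← integral_const_mul, ← integral_add h2 h4]
      congr 1 with t
      ring

theorem isLittleO_integral_mul_gammaKernel_sub_taylor {g g' g'' : ℝ → ℝ} {C : ℝ} (hx : 0 < x)
    (hg : ∀ᶠ t in 𝓝 x, HasDerivAt g (g' t) t) (hg' : ∀ᶠ t in 𝓝 x, HasDerivAt g' (g'' t) t)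
    (hg'' : ContinuousAt g'' x) (hmeas : AEStronglyMeasurable g (volume.restrict (Ioi 0)))
    (hgC : ∀ t > 0, |g t| ≤ C * (t + t⁻¹)) :
    (fun b => (∫ t in Ioi 0, g t * gammaKernel x b t) - g x - x * b / 2 * g'' x)
      =o[𝓝[>] 0] id := by
  refine isLittleO_iff.2 fun c hc => ?_
  set ε := c / 2 / x
  obtain ⟨ρ, hρ, hnear⟩ := Metric.eventually_nhds_iff.1 (hg.and (hg'.and
    (hg''.eventually (Metric.closedBall_mem_nhds (g'' x) (div_pos (half_pos hc) hx)))))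
  set δ := min ρ 1
  have hδ : 0 < δ := lt_min hρ one_pos
  set A := (C + |g x| + |g' x| + |g'' x|) / δ ^ 4
  have hR : ∀ t > 0, |g t - (g x + g' x * (t - x) + g'' x / 2 * (t - x) ^ 2)| ≤
      ε * (t - x) ^ 2 + A * ((t + t⁻¹) * (t - x) ^ 4) := by
    intro t ht
    rcases lt_or_ge |t - x| δ with hclose | hfar
    · have hball : ∀ y ∈ uIcc x t, dist y x < ρ := fun y hy =>
        ((abs_sub_left_of_mem_uIcc hy).trans_lt hclose).trans_le (min_le_left _ _)
      have hA : 0 ≤ A * ((t + t⁻¹) * (t - x) ^ 4) := by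
        have := (abs_nonneg _).trans (hgC t ht)
        have : 0 ≤ C := by nlinarith [one_le_add_inv ht]
        positivity
      have := abs_sub_taylor_two_le (fun y hy => (hnear (hball y hy)).1)
        (fun y hy => (hnear (hball y hy)).2.1)
        (fun y hy => (Real.dist_eq _ _).symm.trans_le (hnear (hball y hy)).2.2)
      linarith
    · have := abs_sub_taylor_two_le_of_le_abs_sub (c₀ := g x) (c₁ := g' x) (c₂ := g'' x)
        hδ (min_le_right _ _) ht hfar (hgC t ht)
      nlinarith [sq_nonneg (t - x), div_pos (half_pos hc) hx]
  filter_upwards [((isLittleO_integral_add_inv_mul_sub_pow_four_mul_gammaKernel hx).const_mul_left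
    A).bound (half_pos hc), Ioo_mem_nhdsGT hx] with b hm hb
  have := abs_integral_mul_gammaKernel_sub_le hb.1 hb.2 hmeas hR
  rw [Real.norm_eq_abs, Real.norm_eq_abs, id, abs_of_pos hb.1] at hm ⊢
  have hεxb : ε * (x * b) = c / 2 * b := by simp only [ε]; field_simp
  linarith [le_abs_self (A * ∫ t in Ioi 0, (t + t⁻¹) * (t - x) ^ 4 * gammaKernel x b t)]

end GammaKernel

theorem gammaKernel_log_bias_expansion (x : ℝ) (hx : 0 < x) (f : ℝ → ℝ)
    (hf : ContDiffOn ℝ 2 f (Set.Ioi 0))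
    (hbdd : ∃ C : ℝ, ∀ t ∈ Set.Ioi (0 : ℝ),
      |f t| ≤ C ∧ |deriv f t| ≤ C ∧ |deriv (deriv f) t| ≤ C) :
    Tendsto (fun b : ℝ =>
        ((∫ t in Set.Ioi (0 : ℝ), f t * Real.log t * gammaKernel x b t)
          - f x * Real.log x
          - x * b / 2 * (deriv (deriv f) x * Real.log x + 2 * deriv f x / x
              - f x / x ^ 2)) / b)
      (nhdsWithin 0 (Set.Ioi 0)) (nhds 0) := by
  obtain ⟨C, hC⟩ := hbdd
  have hf' : ContDiffOn ℝ 1 (deriv f) (Ioi 0) := hf.deriv_of_isOpen isOpen_Ioi (by norm_num)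
  have hf1 : ∀ t > 0, HasDerivAt f (deriv f t) t := fun t ht =>
    ((hf.differentiableOn (by norm_num)).differentiableAt (Ioi_mem_nhds ht)).hasDerivAt
  have hf2 : ∀ t > 0, HasDerivAt (deriv f) (deriv (deriv f) t) t := fun t ht =>
    ((hf'.differentiableOn one_ne_zero).differentiableAt (Ioi_mem_nhds ht)).hasDerivAt
  have hf2x : ContinuousAt (deriv (deriv f)) x :=
    (hf'.continuousOn_deriv_of_isOpen isOpen_Ioi le_rfl).continuousAt (Ioi_mem_nhds hx)
  have hC0 : 0 ≤ C := (abs_nonneg _).trans (hC x hx).1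
  refine (isLittleO_integral_mul_gammaKernel_sub_taylor (C := C) hx
    (eventually_of_mem (Ioi_mem_nhds hx) fun t ht => (hf1 t ht).mul_log (ne_of_gt ht))
    (eventually_of_mem (Ioi_mem_nhds hx) fun t ht =>
      hasDerivAt_mul_log_add_div (hf1 t ht) (hf2 t ht) (ne_of_gt ht)) ?_
    ((hf.continuousOn.mul (continuousOn_log.mono fun t ht => ne_of_gt ht)).aestronglyMeasurable
      measurableSet_Ioi)
    fun t ht => ?_).tendsto_div_nhds_zero
  · have hfx := (hf1 x hx).continuousAt
    have hf'x := (hf2 x hx).continuousAt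
    have hlog := continuousAt_log hx.ne'
    fun_prop (disch := positivity)
  · rw [abs_mul]
    exact mul_le_mul (hC t ht).1 (abs_log_le_add_inv ht) (abs_nonneg _) hC0
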